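/- Let A = (a_{ij}) ∈ (𝕊max^∨)^{n×n} be TPSD, let k > 1, and let j₁, …, j_k be pairwise distinct elements of [n]. Set w = a_{j₁j₂} ⊙ a_{j₂j₃} ⊙ ⋯ ⊙ a_{j_{k−1}j_k} ⊙ a_{j_kj₁}. Then |w| ≤ a_{j₁j₁} ⊙ a_{j₂j₂} ⊙ ⋯ ⊙ a_{j_kj_k}. If moreover A is TPD, then |w| < a_{j₁j₁} ⊙ a_{j₂j₂} ⊙ ⋯ ⊙ a_{j_kj_k}. -/

import Mathlib

/-!
Common framework: the symmetrized tropical semiring 𝕊max over a linearly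
ordered abelian group Γ, represented concretely: an element is either 𝟘
(represented by `none`) or a pair of a modulus `c : Γ` and a sign
(positive, negative or balanced), matching the classes of the quotient
𝕋max²/ℛ described in the paper.
-/

namespace TropPaper

inductive SSign : Type
  | pos
  | neg
  | bal
  deriving DecidableEq

/-- The symmetrized tropical semiring 𝕊max(Γ): `none` is 𝟘, and
`some (c, s)` is the class of modulus `c` and sign `s`. -/
def Smax (Γ : Type) : Type := Option (Γ × SSign)

/-- Γ is divisible. -/
def DivisibleGrp (Γ : Type) [AddCommGroup Γ] : Prop :=
  ∀ k : ℕ, 0 < k → ∀ a : Γ, ∃ b : Γ, k • b = a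

section Defs

variable {Γ : Type} [AddCommGroup Γ] [LinearOrder Γ] [IsOrderedAddMonoid Γ]

/-- 𝟘 -/
def szero : Smax Γ := none

/-- 𝟙 -/
def sone : Smax Γ := some ((0 : Γ), SSign.pos)

/-- modulus |·| : 𝕊max → 𝕋max = WithBot Γ -/
def smod : Smax Γ → WithBot Γ
  | none => ⊥
  | some (c, _) => (c : WithBot Γ)

def sgnMul : SSign → SSign → SSign
  | SSign.pos, t => t
  | SSign.neg, SSign.pos => SSign.neg
  | SSign.neg, SSign.neg => SSign.pos
  | SSign.neg, SSign.bal => SSign.bal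
  | SSign.bal, _ => SSign.bal

/-- ⊕ on 𝕊max -/
def sadd : Smax Γ → Smax Γ → Smax Γ
  | none, b => b
  | some a, none => some a
  | some (c, s), some (d, t) =>
      if c < d then some (d, t)
      else if d < c then some (c, s)
      else some (c, if s = t then s else SSign.bal)

/-- ⊖ (unary) on 𝕊max -/
def sneg : Smax Γ → Smax Γ
  | none => none
  | some (c, SSign.pos) => some (c, SSign.neg)
  | some (c, SSign.neg) => some (c, SSign.pos)
  | some (c, SSign.bal) => some (c, SSign.bal)

/-- ⊙ on 𝕊max -/
def smul : Smax Γ → Smax Γ → Smax Γ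
  | none, _ => none
  | some _, none => none
  | some (c, s), some (d, t) => some (c + d, sgnMul s t)

/-- a ⊖ b -/
def ssub (a b : Smax Γ) : Smax Γ := sadd a (sneg b)

/-- a° = a ⊖ a -/
def sbal (a : Smax Γ) : Smax Γ := ssub a a

/-- the positive element with the same modulus (|·| seen inside 𝕊max⊕) -/
def sabs : Smax Γ → Smax Γ
  | none => none
  | some (c, _) => some (c, SSign.pos)

/-- multiplicative inverse (of invertible, i.e. signed nonzero, elements) -/
def sinv : Smax Γ → Smax Γ
  | none => none
  | some (c, s) => some (-c, s)

/-- a^{⊙k} -/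
def spow (a : Smax Γ) : ℕ → Smax Γ
  | 0 => sone
  | k + 1 => smul a (spow a k)

/-- membership in 𝕊max° (balanced elements together with 𝟘) -/
def IsBal : Smax Γ → Prop
  | none => True
  | some (_, s) => s = SSign.bal

/-- membership in 𝕊max⊕ (positive elements together with 𝟘) -/
def IsPos : Smax Γ → Prop
  | none => True
  | some (_, s) => s = SSign.pos

/-- membership in 𝕊max^∨ (signed elements) -/
def IsSigned : Smax Γ → Prop
  | none => True
  | some (_, s) => s ≠ SSign.bal

/-- the balance relation a ∇ b -/
def Balance (a b : Smax Γ) : Prop := IsBal (ssub a b)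

/-- a ⪯ b -/
def natLe (a b : Smax Γ) : Prop := sadd a b = b

/-- a ≤ b :⟺ b ⊖ a ∈ 𝕊max⊕ ∪ 𝕊max° -/
def sle (a b : Smax Γ) : Prop := IsPos (ssub b a) ∨ IsBal (ssub b a)

/-- a < b :⟺ b ⊖ a ∈ 𝕊max⊕ ∖ {𝟘} -/
def slt (a b : Smax Γ) : Prop := IsPos (ssub b a) ∧ ssub b a ≠ szero

/-- finite ⊕-sum over a list -/
def sumS {α : Type} (l : List α) (f : α → Smax Γ) : Smax Γ :=
  (l.map f).foldr sadd szero

/-- finite ⊙-product over a list -/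
def prodS {α : Type} (l : List α) (f : α → Smax Γ) : Smax Γ :=
  (l.map f).foldr smul sone

/-- the zero vector -/
def zeroVecS {n : ℕ} : Fin n → Smax Γ := fun _ => szero

def VecSigned {n : ℕ} (x : Fin n → Smax Γ) : Prop := ∀ i, IsSigned (x i)

def MatSigned {n : ℕ} (A : Matrix (Fin n) (Fin n) (Smax Γ)) : Prop :=
  ∀ i j, IsSigned (A i j)

def SymmS {n : ℕ} (A : Matrix (Fin n) (Fin n) (Smax Γ)) : Prop :=
  ∀ i j, A i j = A j i

/-- A ⊙ v -/
def matVecS {n : ℕ} (A : Matrix (Fin n) (Fin n) (Smax Γ)) (v : Fin n → Smax Γ) :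
    Fin n → Smax Γ :=
  fun i => sumS (List.finRange n) fun j => smul (A i j) (v j)

/-- A ⊙ B -/
def matMulS {n : ℕ} (A B : Matrix (Fin n) (Fin n) (Smax Γ)) :
    Matrix (Fin n) (Fin n) (Smax Γ) :=
  Matrix.of fun i j => sumS (List.finRange n) fun l => smul (A i l) (B l j)

/-- the identity matrix I -/
def idMatS {n : ℕ} : Matrix (Fin n) (Fin n) (Smax Γ) :=
  Matrix.of fun i j => if i = j then sone else szero

/-- xᵀ ⊙ A ⊙ x -/
def quadFormS {n : ℕ} (A : Matrix (Fin n) (Fin n) (Smax Γ)) (x : Fin n → Smax Γ) :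
    Smax Γ :=
  sumS (List.finRange n) fun i => sumS (List.finRange n) fun j =>
    smul (x i) (smul (A i j) (x j))

/-- tropical positive definiteness (the quadratic-form condition) -/
def TPD {n : ℕ} (A : Matrix (Fin n) (Fin n) (Smax Γ)) : Prop :=
  ∀ x : Fin n → Smax Γ, VecSigned x → x ≠ zeroVecS → slt szero (quadFormS A x)

/-- tropical positive semidefiniteness -/
def TPSD {n : ℕ} (A : Matrix (Fin n) (Fin n) (Smax Γ)) : Prop :=
  ∀ x : Fin n → Smax Γ, VecSigned x → x ≠ zeroVecS → sle szero (quadFormS A x)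

/-- sgn(π) ∈ {𝟙, ⊖𝟙} -/
def permSignS {n : ℕ} (π : Equiv.Perm (Fin n)) : Smax Γ :=
  if (Equiv.Perm.sign π : ℤ) = 1 then sone else sneg sone

/-- the determinant over 𝕊max -/
noncomputable def detS {n : ℕ} (M : Matrix (Fin n) (Fin n) (Smax Γ)) : Smax Γ :=
  sumS (Finset.univ : Finset (Equiv.Perm (Fin n))).toList fun π =>
    smul (permSignS π) (prodS (List.finRange n) fun i => M i (π i))

/-- the adjugate matrix over 𝕊max -/
noncomputable def adjS {n : ℕ} (M : Matrix (Fin (n+1)) (Fin (n+1)) (Smax Γ)) :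
    Matrix (Fin (n+1)) (Fin (n+1)) (Smax Γ) :=
  Matrix.of fun i j =>
    smul (spow (sneg sone) (i.val + j.val))
      (detS (Matrix.of fun a b : Fin n => M (Fin.succAbove j a) (Fin.succAbove i b)))

/-- γ ⊙ I ⊖ A -/
def charMatS {n : ℕ} (γ : Smax Γ) (A : Matrix (Fin n) (Fin n) (Smax Γ)) :
    Matrix (Fin n) (Fin n) (Smax Γ) :=
  Matrix.of fun i j => ssub (smul γ (idMatS i j)) (A i j)

/-- tr_k(A) = ⊕_{|K| = k} det(A[K,K]) -/
noncomputable def trkS {n : ℕ} (k : ℕ) (A : Matrix (Fin n) (Fin n) (Smax Γ)) : Smax Γ :=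
  sumS ((Finset.univ : Finset (Fin n)).powersetCard k).attach.toList fun K =>
    detS (Matrix.of fun a b : Fin k =>
      A (K.1.orderEmbOfFin (Finset.mem_powersetCard.mp K.2).2 a)
        (K.1.orderEmbOfFin (Finset.mem_powersetCard.mp K.2).2 b))

/-- matrix power A^{⊙k} -/
def matPowS {n : ℕ} (A : Matrix (Fin n) (Fin n) (Smax Γ)) :
    ℕ → Matrix (Fin n) (Fin n) (Smax Γ)
  | 0 => idMatS
  | k + 1 => matMulS A (matPowS A k)

/-- partial Kleene sums I ⊕ A ⊕ ⋯ ⊕ A^{⊙m} -/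
def starPartialS {n : ℕ} (A : Matrix (Fin n) (Fin n) (Smax Γ)) (m : ℕ) :
    Matrix (Fin n) (Fin n) (Smax Γ) :=
  Matrix.of fun i j => sumS (List.range (m+1)) fun k => matPowS A k i j

/-- the diagonal matrix D^(k) with diagonal (γ₁,…,γ_{k−1},𝟘,…,𝟘) (0-based k) -/
def DmatS {n : ℕ} (A : Matrix (Fin n) (Fin n) (Smax Γ)) (k : Fin n) :
    Matrix (Fin n) (Fin n) (Smax Γ) :=
  Matrix.of fun i j => if i = j ∧ i < k then A i i else szero

/-- the complementary matrix A^(k) -/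
def AmatS {n : ℕ} (A : Matrix (Fin n) (Fin n) (Smax Γ)) (k : Fin n) :
    Matrix (Fin n) (Fin n) (Smax Γ) :=
  Matrix.of fun i j => if i ≠ j ∨ k ≤ i then A i j else szero

/-- M = (γ⊙I ⊖ D^(k))^{⊙−1} ⊙ A^(k) -/
def MmatS {n : ℕ} (A : Matrix (Fin n) (Fin n) (Smax Γ)) (k : Fin n) :
    Matrix (Fin n) (Fin n) (Smax Γ) :=
  Matrix.of fun i j =>
    smul (sinv (if i < k then sneg (A i i) else A k k)) (AmatS A k i j)

/-- λ_k = (⊖𝟙)^{⊙(k−1)} ⊙ γ₁ ⊙ ⋯ ⊙ γ_{k−1} ⊙ γ^{⊙(n−k)} (0-based k, size n) -/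
def lamkS {n : ℕ} (A : Matrix (Fin n) (Fin n) (Smax Γ)) (k : Fin n) : Smax Γ :=
  smul (spow (sneg sone) k.val)
    (smul (prodS ((List.finRange n).filter (fun i => i < k)) fun i => A i i)
      (spow (A k k) (n - 1 - k.val)))

/-- irreducibility: the digraph of nonzero entries is strongly connected -/
def IrreducibleS {n : ℕ} (A : Matrix (Fin n) (Fin n) (Smax Γ)) : Prop :=
  ∀ i j : Fin n, Relation.ReflTransGen (fun a b => A a b ≠ szero) i j

/-- diagonal entries sorted non-increasingly for ⪯ -/
def DiagSortedS {n : ℕ} (A : Matrix (Fin n) (Fin n) (Smax Γ)) : Prop :=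
  ∀ i j : Fin n, i ≤ j → natLe (A j j) (A i i)

/-! 𝕋max-side notions (for the characteristic polynomial of |A|). -/

/-- finite max over a list in 𝕋max -/
def sumT {α : Type} (l : List α) (f : α → WithBot Γ) : WithBot Γ :=
  (l.map f).foldr max ⊥

/-- finite ⊙-product over a list in 𝕋max -/
def prodT {α : Type} (l : List α) (f : α → WithBot Γ) : WithBot Γ :=
  (l.map f).foldr (· + ·) (0 : WithBot Γ)

/-- the permanent over 𝕋max -/
noncomputable def perT {n : ℕ} (M : Matrix (Fin n) (Fin n) (WithBot Γ)) : WithBot Γ :=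
  sumT (Finset.univ : Finset (Equiv.Perm (Fin n))).toList fun π =>
    prodT (List.finRange n) fun i => M i (π i)

/-- coefficient of X^k in the 𝕋max-characteristic polynomial of B -/
noncomputable def charCoeffT {n : ℕ} (B : Matrix (Fin n) (Fin n) (WithBot Γ)) (k : ℕ) : WithBot Γ :=
  if k ≤ n then
    sumT ((Finset.univ : Finset (Fin n)).powersetCard (n - k)).attach.toList fun K =>
      perT (Matrix.of fun a b : Fin (n - k) =>
        B (K.1.orderEmbOfFin (Finset.mem_powersetCard.mp K.2).2 a)
          (K.1.orderEmbOfFin (Finset.mem_powersetCard.mp K.2).2 b))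
  else ⊥

/-- multiplicity of x as a 𝕋max-root of the formal polynomial of degree ≤ n
with coefficients Q: for x = ⊥ it is the lower degree, for x = c ∈ Γ it is the
difference between the largest and smallest exponents attaining
max_k (Q_k + k·c). -/
noncomputable def rootMultT (n : ℕ) (Q : ℕ → WithBot Γ) (x : WithBot Γ) : ℕ :=
  WithBot.recBotCoe
    (sInf {k | Q k ≠ ⊥})
    (fun c =>
      sSup {k | k ≤ n ∧ Q k + ((k • c : Γ) : WithBot Γ)
              = sumT (List.range (n+1)) (fun l => Q l + ((l • c : Γ) : WithBot Γ))}
        - sInf {k | k ≤ n ∧ Q k + ((k • c : Γ) : WithBot Γ)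
              = sumT (List.range (n+1)) (fun l => Q l + ((l • c : Γ) : WithBot Γ))})
    x

end Defs

/-- the signed valuation associated with a valuation v on an ordered field L -/
def svMap {Γ : Type} [AddCommGroup Γ] [LinearOrder Γ] [IsOrderedAddMonoid Γ] {L : Type} [Field L] [LinearOrder L] [IsStrictOrderedRing L]
    (v : L → WithBot Γ) (b : L) : Smax Γ :=
  if b = 0 then szero
  else if 0 < b then WithBot.recBotCoe szero (fun c => some (c, SSign.pos)) (v b)
  else WithBot.recBotCoe szero (fun c => some (c, SSign.neg)) (v b)

end TropPaper

/-!
Evaluating the quadratic form at the unit vector `eᵢ` shows that the diagonal of a TPSD matrix is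
positive. Evaluating it at `eᵢ ⊕ μ ⊙ eⱼ`, with the sign of `μ` chosen so that both cross terms
`aᵢⱼ ⊙ μ` are negative, shows `|aᵢⱼ|^{⊙2} ≤ aᵢᵢ ⊙ aⱼⱼ`: otherwise divisibility of `Γ` gives a
modulus of `μ` for which the negative cross terms strictly dominate `aᵢᵢ` and `μ^{⊙2} ⊙ aⱼⱼ`. For
a TPD matrix a tie already makes the form non-positive, so the inequality is strict. Multiplying
these inequalities along the cycle, every diagonal entry occurs twice on the right, so
`|w|^{⊙2} ≤ (aⱼ₁ⱼ₁ ⊙ ⋯ ⊙ aⱼₖⱼₖ)^{⊙2}`, and squaring is monotone and reflects the order.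
-/

theorem Fin.sum_add_apply_add_one {M : Type*} [AddCommMonoid M] {k : ℕ} [NeZero k]
    (d : Fin k → M) : ∑ l, (d l + d (l + 1)) = ∑ l, d l + ∑ l, d l := by
  rw [Finset.sum_add_distrib, Fintype.sum_equiv (Equiv.addRight 1) (fun l => d (l + 1)) d
    fun _ => rfl]

namespace WithBot

variable {α : Type*} [AddCommMonoid α] [LinearOrder α] [IsOrderedCancelAddMonoid α]

protected lemma add_lt_add {a b c d : WithBot α} (hab : a < b) (hcd : c < d) : a + c < b + d :=
  (add_le_add_right hcd.le a).trans_lt (WithBot.add_lt_add_right (ne_bot_of_gt hcd) hab)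

lemma le_of_add_self_le_add_self {a b : WithBot α} (h : a + a ≤ b + b) : a ≤ b :=
  le_of_not_gt fun hba => (WithBot.add_lt_add hba hba).not_ge h

lemma sum_lt_sum_of_nonempty {ι : Type*} {s : Finset ι} {f g : ι → WithBot α} (hs : s.Nonempty)
    (h : ∀ i ∈ s, f i < g i) : ∑ i ∈ s, f i < ∑ i ∈ s, g i := by
  induction hs using Finset.Nonempty.cons_induction with
  | singleton a => simpa using h a (by simp)
  | cons a s ha hs ih =>
    simp only [Finset.sum_cons]
    exact WithBot.add_lt_add (h a (by simp)) (ih fun i hi => h i (by simp [hi]))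

variable {k : ℕ} [NeZero k] {x d : Fin k → WithBot α}

lemma sum_le_sum_of_add_self_le_cyclic (h : ∀ l, x l + x l ≤ d l + d (l + 1)) :
    ∑ l, x l ≤ ∑ l, d l := by
  refine le_of_add_self_le_add_self ?_
  rw [← Finset.sum_add_distrib, ← Fin.sum_add_apply_add_one]
  exact Finset.sum_le_sum fun l _ => h l

lemma sum_lt_sum_of_add_self_lt_cyclic (h : ∀ l, x l + x l < d l + d (l + 1)) :
    ∑ l, x l < ∑ l, d l := by
  refine lt_of_nsmul_lt_nsmul_right 2 ?_
  rw [two_nsmul, two_nsmul, ← Finset.sum_add_distrib, ← Fin.sum_add_apply_add_one]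
  exact sum_lt_sum_of_nonempty Finset.univ_nonempty fun l _ => h l

end WithBot

namespace TropPaper

section Modulus

variable {Γ : Type}

@[simp] lemma smod_sabs (a : Smax Γ) : smod (sabs a) = smod a := by
  rcases a with _ | ⟨c, s⟩ <;> rfl

lemma isPos_sabs (a : Smax Γ) : IsPos (sabs a) := by
  rcases a with _ | ⟨c, s⟩ <;> trivial

@[simp] lemma smod_some (c : Γ) (s : SSign) : smod (some (c, s) : Smax Γ) = c := rfl

@[simp] lemma smod_sneg (a : Smax Γ) : smod (sneg a) = smod a := by
  rcases a with _ | ⟨c, _ | _ | _⟩ <;> rfl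

lemma eq_of_isPos_of_smod_eq {a b : Smax Γ} (ha : IsPos a) (hb : IsPos b)
    (h : smod a = smod b) : a = b := by
  rcases a with _ | ⟨c, s⟩ <;> rcases b with _ | ⟨d, t⟩
  · rfl
  · exact absurd h WithBot.bot_ne_coe
  · exact absurd h WithBot.coe_ne_bot
  · cases ha; cases hb; cases WithBot.coe_injective h; rfl

end Modulus

section Addition

variable {Γ : Type} [LinearOrder Γ]

@[simp] lemma sadd_szero (a : Smax Γ) : sadd a szero = a := by cases a <;> rfl

@[simp] lemma szero_sadd (a : Smax Γ) : sadd szero a = a := rfl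

lemma sadd_some_some (c d : Γ) (s t : SSign) :
    sadd (some (c, s)) (some (d, t)) =
      if c < d then some (d, t) else if d < c then some (c, s)
      else some (c, if s = t then s else SSign.bal) := rfl

lemma sadd_comm (a b : Smax Γ) : sadd a b = sadd b a := by
  rcases a with _ | ⟨c, s⟩ <;> rcases b with _ | ⟨d, t⟩ <;> try rfl
  rw [sadd_some_some, sadd_some_some]
  rcases lt_trichotomy c d with h | rfl | h
  · rw [if_pos h, if_neg h.not_gt, if_pos h]
  · by_cases hst : s = t
    · subst hst; rfl
    · simp only [lt_irrefl, ↓reduceIte]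
      rw [if_neg hst, if_neg (Ne.symm hst)]
  · rw [if_neg h.not_gt, if_pos h, if_pos h]

@[simp] lemma sadd_self (a : Smax Γ) : sadd a a = a := by
  rcases a with _ | ⟨c, s⟩
  · rfl
  · rw [sadd_some_some, if_neg (lt_irrefl c), if_neg (lt_irrefl c), if_pos rfl]

lemma sadd_eq_right_of_smod_lt {a b : Smax Γ} (h : smod a < smod b) : sadd a b = b := by
  rcases a with _ | ⟨c, s⟩ <;> rcases b with _ | ⟨d, t⟩
  · rfl
  · rfl
  · exact absurd h not_lt_bot
  · rw [sadd_some_some, if_pos (WithBot.coe_lt_coe.mp h)]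

lemma sadd_eq_left_of_smod_lt {a b : Smax Γ} (h : smod b < smod a) : sadd a b = a := by
  rw [sadd_comm, sadd_eq_right_of_smod_lt h]

end Addition

section Multiplication

variable {Γ : Type} [AddCommGroup Γ]

@[simp] lemma smul_szero (a : Smax Γ) : smul a szero = szero := by cases a <;> rfl

@[simp] lemma szero_smul (a : Smax Γ) : smul szero a = szero := rfl

@[simp] lemma sone_smul (a : Smax Γ) : smul sone a = a := by
  rcases a with _ | ⟨c, s⟩
  · rfl
  · change some (0 + c, s) = _
    rw [zero_add]

@[simp] lemma smul_sone (a : Smax Γ) : smul a sone = a := by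
  rcases a with _ | ⟨c, s⟩
  · rfl
  · change some (c + 0, sgnMul s .pos) = _
    cases s <;> rw [add_zero] <;> rfl

lemma sgnMul_comm (s t : SSign) : sgnMul s t = sgnMul t s := by
  cases s <;> cases t <;> rfl

lemma smul_comm (a b : Smax Γ) : smul a b = smul b a := by
  rcases a with _ | ⟨c, s⟩ <;> rcases b with _ | ⟨d, t⟩ <;> try rfl
  change some (c + d, sgnMul s t) = some (d + c, sgnMul t s)
  rw [add_comm, sgnMul_comm]

lemma smod_smul (a b : Smax Γ) : smod (smul a b) = smod a + smod b := by
  rcases a with _ | ⟨c, s⟩ <;> rcases b with _ | ⟨d, t⟩ <;> rfl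

lemma smod_prodS {α : Type} (l : List α) (f : α → Smax Γ) :
    smod (prodS l f) = (l.map fun x => smod (f x)).sum := by
  induction l with
  | nil => rfl
  | cons a t ih => simp only [prodS, List.map_cons, List.foldr_cons, smod_smul, List.sum_cons, ← ih]

lemma isPos_smul {a b : Smax Γ} (ha : IsPos a) (hb : IsPos b) : IsPos (smul a b) := by
  rcases a with _ | ⟨c, s⟩ <;> rcases b with _ | ⟨d, t⟩ <;> try trivial
  cases ha; cases hb; rfl

lemma isPos_prodS {α : Type} {l : List α} {f : α → Smax Γ} (h : ∀ x ∈ l, IsPos (f x)) :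
    IsPos (prodS l f) := by
  induction l with
  | nil => rfl
  | cons a t ih => exact isPos_smul (h a (by simp)) (ih fun x hx => h x (by simp [hx]))

lemma isSigned_sone : IsSigned (sone : Smax Γ) := nofun

lemma ne_zeroVecS_of_apply_eq_sone {n : ℕ} {i : Fin n} {x : Fin n → Smax Γ} (hx : x i = sone) :
    x ≠ zeroVecS := by
  rintro rfl
  cases hx

lemma exists_sgnMul_eq_neg {s : SSign} (hs : s ≠ .bal) : ∃ σ, σ ≠ .bal ∧ sgnMul s σ = .neg := by
  cases s
  exacts [⟨.neg, nofun, rfl⟩, ⟨.pos, nofun, rfl⟩, absurd rfl hs]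

lemma vecSigned_unit {n : ℕ} (i : Fin n) :
    VecSigned (fun t => if t = i then (sone : Smax Γ) else szero) := fun t => by
  dsimp only
  split_ifs
  exacts [isSigned_sone, trivial]

end Multiplication

section Order

variable {Γ : Type} [LinearOrder Γ]

@[simp] lemma ssub_szero (a : Smax Γ) : ssub a szero = a := sadd_szero a

lemma isBal_ssub_self (a : Smax Γ) : IsBal (ssub a a) := by
  rcases a with _ | ⟨c, s⟩
  · trivial
  · cases s <;> simp only [ssub, sneg, sadd_some_some, lt_irrefl, if_false] <;> rfl

lemma ssub_eq_self_of_smod_lt {a b : Smax Γ} (h : smod a < smod b) : ssub b a = b :=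
  sadd_eq_left_of_smod_lt (by rwa [smod_sneg])

lemma sle_of_isPos {a b : Smax Γ} (ha : IsPos a) (hb : IsPos b) (h : smod a ≤ smod b) :
    sle a b := by
  rcases h.lt_or_eq with h | h
  · exact Or.inl (by rwa [ssub_eq_self_of_smod_lt h])
  · exact Or.inr (by rw [eq_of_isPos_of_smod_eq ha hb h]; exact isBal_ssub_self b)

lemma slt_of_isPos {a b : Smax Γ} (hb : IsPos b) (h : smod a < smod b) : slt a b := by
  refine ⟨by rwa [ssub_eq_self_of_smod_lt h], ?_⟩
  rw [ssub_eq_self_of_smod_lt h]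
  rintro rfl
  exact not_lt_bot h

lemma isPos_of_sle_szero {a : Smax Γ} (hs : IsSigned a) (h : sle szero a) : IsPos a := by
  rw [sle, ssub_szero] at h
  rcases a with _ | ⟨c, s⟩
  · trivial
  · exact h.resolve_right hs

lemma not_sle_szero_neg (v : Γ) : ¬ sle szero (some (v, .neg) : Smax Γ) := by
  rintro (h | h) <;> cases h

lemma slt_szero_iff {a : Smax Γ} : slt szero a ↔ ∃ c, a = some (c, .pos) := by
  rw [slt, ssub_szero]
  rcases a with _ | ⟨c, s⟩
  · exact ⟨fun h => absurd rfl h.2, fun ⟨_, h⟩ => nomatch h⟩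
  · constructor
    · rintro ⟨hs, -⟩
      cases hs
      exact ⟨c, rfl⟩
    · rintro ⟨d, hd⟩
      cases hd
      exact ⟨rfl, Option.some_ne_none _⟩

lemma not_slt_szero_sadd {a b : Smax Γ} (ha : ¬ slt szero a) (hb : ¬ slt szero b) :
    ¬ slt szero (sadd a b) := by
  simp only [slt_szero_iff, not_exists] at *
  rcases a with _ | ⟨c, s⟩ <;> rcases b with _ | ⟨d, t⟩
  · exact hb
  · exact hb
  · exact ha
  · intro e
    rw [sadd_some_some]
    split_ifs with h₁ h₂ hst
    · exact hb e
    · exact ha e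
    · exact ha e
    · intro h; cases h

lemma not_slt_szero_sadd_neg {a : Smax Γ} {v : Γ} (h : smod a ≤ v) :
    ¬ slt szero (sadd a (some (v, .neg))) := by
  rw [slt_szero_iff, not_exists]
  rcases h.lt_or_eq with h | h
  · intro e
    rw [sadd_eq_right_of_smod_lt (b := some (v, .neg)) h]
    intro h; cases h
  · rcases a with _ | ⟨c, s⟩
    · exact absurd h WithBot.bot_ne_coe
    · obtain rfl : c = v := WithBot.coe_injective h
      intro e
      rw [sadd_some_some, if_neg (lt_irrefl c), if_neg (lt_irrefl c)]
      cases s <;> intro h <;> cases h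

end Order

section Divisible

variable {Γ : Type} [AddCommGroup Γ]

lemma exists_two_nsmul_sub_eq (hdiv : DivisibleGrp Γ) (d₁ d₂ c : Γ) :
    ∃ μ : Γ, 2 • (c + μ - d₁) = c + c - (d₁ + d₂) ∧ 2 • (c - (d₂ + μ)) = c + c - (d₁ + d₂) := by
  obtain ⟨μ, hμ⟩ := hdiv 2 two_pos (d₁ - d₂)
  refine ⟨μ, ?_, ?_⟩ <;> simp only [nsmul_sub, nsmul_add, hμ] <;> abel

end Divisible

section Sums

variable {Γ : Type} [LinearOrder Γ] {α : Type}

lemma sumS_cons (a : α) (l : List α) (f : α → Smax Γ) :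
    sumS (a :: l) f = sadd (f a) (sumS l f) := rfl

lemma sumS_eq_szero {l : List α} {f : α → Smax Γ} (h : ∀ x ∈ l, f x = szero) :
    sumS l f = szero := by
  induction l with
  | nil => rfl
  | cons a t ih =>
    rw [sumS_cons, h a (by simp), ih fun x hx => h x (by simp [hx]), szero_sadd]

lemma sumS_eq_single {l : List α} {f : α → Smax Γ} {a : α} (hl : l.Nodup) (ha : a ∈ l)
    (h : ∀ x ∈ l, x ≠ a → f x = szero) : sumS l f = f a := by
  induction l with
  | nil => simp at ha
  | cons b t ih =>
    obtain ⟨hbt, hl⟩ := List.nodup_cons.mp hl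
    rw [sumS_cons]
    by_cases hba : b = a
    · subst hba
      rw [sumS_eq_szero fun x hx => h x (by simp [hx]) (ne_of_mem_of_not_mem hx hbt), sadd_szero]
    · have hat : a ∈ t := (List.mem_cons.mp ha).resolve_left (Ne.symm hba)
      rw [h b (by simp) hba, szero_sadd, ih hl hat fun x hx => h x (by simp [hx])]

lemma sumS_eq_pair {l : List α} {f : α → Smax Γ} {a b : α} (hl : l.Nodup) (ha : a ∈ l)
    (hb : b ∈ l) (hab : a ≠ b) (h : ∀ x ∈ l, x ≠ a → x ≠ b → f x = szero) :
    sumS l f = sadd (f a) (f b) := by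
  induction l with
  | nil => simp at ha
  | cons c t ih =>
    obtain ⟨hct, hl⟩ := List.nodup_cons.mp hl
    rw [sumS_cons]
    by_cases hca : c = a
    · subst hca
      have hbt : b ∈ t := (List.mem_cons.mp hb).resolve_left (Ne.symm hab)
      rw [sumS_eq_single hl hbt fun x hx => h x (by simp [hx]) (ne_of_mem_of_not_mem hx hct)]
    by_cases hcb : c = b
    · subst hcb
      have hat : a ∈ t := (List.mem_cons.mp ha).resolve_left (Ne.symm hca)
      rw [sumS_eq_single hl hat fun x hx hxa => h x (by simp [hx]) hxa
        (ne_of_mem_of_not_mem hx hct), sadd_comm]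
    have hat : a ∈ t := (List.mem_cons.mp ha).resolve_left (Ne.symm hca)
    have hbt : b ∈ t := (List.mem_cons.mp hb).resolve_left (Ne.symm hcb)
    rw [h c (by simp) hca hcb, szero_sadd, ih hl hat hbt fun x hx => h x (by simp [hx])]

end Sums

section QuadForm

variable {Γ : Type} [AddCommGroup Γ] [LinearOrder Γ] {n : ℕ}
  (A : Matrix (Fin n) (Fin n) (Smax Γ)) {x : Fin n → Smax Γ} {i j : Fin n}

lemma quadFormS_of_support_singleton (hx : ∀ t, t ≠ i → x t = szero) :
    quadFormS A x = smul (x i) (smul (A i i) (x i)) := by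
  have hrow : ∀ t, t ≠ i → sumS (List.finRange n) (fun u => smul (x t) (smul (A t u) (x u)))
      = szero := fun t ht => sumS_eq_szero fun u _ => by rw [hx t ht, szero_smul]
  rw [quadFormS, sumS_eq_single (List.nodup_finRange n) (List.mem_finRange i)
      fun t _ ht => hrow t ht,
    sumS_eq_single (List.nodup_finRange n) (List.mem_finRange i)
      fun u _ hu => by rw [hx u hu, smul_szero, smul_szero]]

lemma quadFormS_of_support_pair (hij : i ≠ j) (hx : ∀ t, t ≠ i → t ≠ j → x t = szero) :
    quadFormS A x =
      sadd (sadd (smul (x i) (smul (A i i) (x i))) (smul (x i) (smul (A i j) (x j))))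
        (sadd (smul (x j) (smul (A j i) (x i))) (smul (x j) (smul (A j j) (x j)))) := by
  have hrow : ∀ t, sumS (List.finRange n) (fun u => smul (x t) (smul (A t u) (x u)))
      = sadd (smul (x t) (smul (A t i) (x i))) (smul (x t) (smul (A t j) (x j))) :=
    fun t => sumS_eq_pair (List.nodup_finRange n) (List.mem_finRange i) (List.mem_finRange j) hij
      fun u _ hui huj => by rw [hx u hui huj, smul_szero, smul_szero]
  rw [quadFormS, sumS_eq_pair (List.nodup_finRange n) (List.mem_finRange i)
      (List.mem_finRange j) hij fun t _ hti htj => sumS_eq_szero fun u _ => by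
        rw [hx t hti htj, szero_smul],
    hrow, hrow]

end QuadForm

section PosDef

variable {Γ : Type} [AddCommGroup Γ] [LinearOrder Γ] {n : ℕ}
  {A : Matrix (Fin n) (Fin n) (Smax Γ)} {i j : Fin n}

lemma TPD.tpsd (hA : TPD A) : TPSD A := fun x hx hx0 => Or.inl (hA x hx hx0).1

lemma quadFormS_unit (A : Matrix (Fin n) (Fin n) (Smax Γ)) (i : Fin n) :
    quadFormS A (fun t => if t = i then sone else szero) = A i i := by
  rw [quadFormS_of_support_singleton A fun t ht => if_neg ht]
  simp only [↓reduceIte, sone_smul, smul_sone]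

lemma TPSD.isPos_diag (hA : TPSD A) (hs : IsSigned (A i i)) : IsPos (A i i) :=
  isPos_of_sle_szero hs <| quadFormS_unit A i ▸
    hA _ (vecSigned_unit i) (ne_zeroVecS_of_apply_eq_sone (if_pos rfl))

lemma TPD.exists_diag_eq (hA : TPD A) (i : Fin n) : ∃ d, A i i = some (d, .pos) :=
  slt_szero_iff.mp <| quadFormS_unit A i ▸
    hA _ (vecSigned_unit i) (ne_zeroVecS_of_apply_eq_sone (if_pos rfl))

lemma exists_quadFormS_eq_of_offDiag (hsym : A j i = A i j) (hij : i ≠ j)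
    (hs : IsSigned (A i j)) {c : Γ} {s : SSign} (hc : A i j = some (c, s)) (μ : Γ) :
    ∃ x, VecSigned x ∧ x ≠ zeroVecS ∧ ∃ y : Smax Γ, smod y = smod (A j j) + ↑(μ + μ) ∧
      quadFormS A x =
        sadd (sadd (A i i) (some (c + μ, .neg))) (sadd (some (c + μ, .neg)) y) := by
  obtain ⟨σ, hσ, hsσ⟩ := exists_sgnMul_eq_neg (hc ▸ hs : IsSigned (some (c, s)))
  let v : Smax Γ := some (μ, σ)
  let x : Fin n → Smax Γ := fun t => if t = i then sone else if t = j then v else szero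
  have hxi : x i = sone := if_pos rfl
  have hxj : x j = v := by simp only [x, if_neg hij.symm, ↓reduceIte]
  have hcross : smul (A i j) v = some (c + μ, .neg) := by
    rw [hc]
    change some (c + μ, sgnMul s σ) = _
    rw [hsσ]
  refine ⟨x, fun t => ?_, ne_zeroVecS_of_apply_eq_sone hxi, smul v (smul (A j j) v), ?_, ?_⟩
  · simp only [x]
    split_ifs
    exacts [isSigned_sone, hσ, trivial]
  · rw [smod_smul, smod_smul, WithBot.coe_add]
    change (μ : WithBot Γ) + (_ + (μ : WithBot Γ)) = _
    abel
  · rw [quadFormS_of_support_pair A hij fun t hti htj => by simp only [x, hti, htj, ↓reduceIte],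
      hxi, hxj, hsym]
    simp only [sone_smul, smul_sone]
    rw [smul_comm v, hcross]

end PosDef

section OffDiag

variable {Γ : Type} [AddCommGroup Γ] [LinearOrder Γ] [IsOrderedAddMonoid Γ] {n : ℕ}
  {A : Matrix (Fin n) (Fin n) (Smax Γ)} {i j : Fin n}

lemma exists_between_of_add_le (hdiv : DivisibleGrp Γ) {d₁ d₂ c : Γ} (h : d₁ + d₂ ≤ c + c) :
    ∃ μ : Γ, d₁ ≤ c + μ ∧ d₂ + μ ≤ c := by
  obtain ⟨μ, h₁, h₂⟩ := exists_two_nsmul_sub_eq hdiv d₁ d₂ c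
  refine ⟨μ, ?_, ?_⟩
  · exact sub_nonneg.mp ((nsmul_nonneg_iff two_ne_zero).mp (h₁ ▸ sub_nonneg.mpr h))
  · exact sub_nonneg.mp ((nsmul_nonneg_iff two_ne_zero).mp (h₂ ▸ sub_nonneg.mpr h))

lemma exists_between_of_add_lt (hdiv : DivisibleGrp Γ) [Nontrivial Γ] {d₁ d₂ : WithBot Γ} {c : Γ}
    (h : d₁ + d₂ < ↑c + ↑c) : ∃ μ : Γ, d₁ < ↑(c + μ) ∧ d₂ + ↑μ < ↑c := by
  induction d₁ using WithBot.recBotCoe with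
  | bot =>
    induction d₂ using WithBot.recBotCoe with
    | bot => exact ⟨0, WithBot.bot_lt_coe _, WithBot.bot_lt_coe _⟩
    | coe e =>
      obtain ⟨μ, hμ⟩ := exists_lt (c - e)
      exact ⟨μ, WithBot.bot_lt_coe _, by exact_mod_cast lt_sub_iff_add_lt'.mp hμ⟩
  | coe e₁ =>
    induction d₂ using WithBot.recBotCoe with
    | bot =>
      obtain ⟨μ, hμ⟩ := exists_gt (e₁ - c)
      exact ⟨μ, by exact_mod_cast sub_lt_iff_lt_add'.mp hμ, WithBot.bot_lt_coe _⟩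
    | coe e₂ =>
      have h : e₁ + e₂ < c + c := by exact_mod_cast h
      obtain ⟨μ, h₁, h₂⟩ := exists_two_nsmul_sub_eq hdiv e₁ e₂ c
      refine ⟨μ, ?_, ?_⟩ <;> norm_cast
      · exact sub_pos.mp ((nsmul_pos_iff two_ne_zero).mp (h₁ ▸ sub_pos.mpr h))
      · exact sub_pos.mp ((nsmul_pos_iff two_ne_zero).mp (h₂ ▸ sub_pos.mpr h))

lemma TPSD.smod_offDiag_add_self_le (hdiv : DivisibleGrp Γ) [Nontrivial Γ] (hA : TPSD A)
    (hsym : A j i = A i j) (hs : IsSigned (A i j)) (hij : i ≠ j) :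
    smod (A i j) + smod (A i j) ≤ smod (A i i) + smod (A j j) := by
  rcases hc : A i j with _ | ⟨c, s⟩
  · exact bot_le
  by_contra! hlt
  rw [smod_some] at hlt
  obtain ⟨μ, hμi, hμj⟩ := exists_between_of_add_lt hdiv hlt
  obtain ⟨x, hx, hx0, y, hy, hq⟩ := exists_quadFormS_eq_of_offDiag hsym hij hs hc μ
  have hyμ : smod y < ↑(c + μ) := by
    rw [hy, WithBot.coe_add, WithBot.coe_add, ← add_assoc]
    exact WithBot.add_lt_add_right WithBot.coe_ne_bot hμj
  rw [sadd_eq_right_of_smod_lt (b := (some (c + μ, .neg) : Smax Γ)) hμi,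
    sadd_eq_left_of_smod_lt (a := (some (c + μ, .neg) : Smax Γ)) hyμ,
    sadd_self (some (c + μ, .neg))] at hq
  exact not_sle_szero_neg _ (hq ▸ hA x hx hx0)

lemma TPD.smod_offDiag_add_self_lt (hdiv : DivisibleGrp Γ) (hA : TPD A)
    (hsym : A j i = A i j) (hs : IsSigned (A i j)) (hij : i ≠ j) :
    smod (A i j) + smod (A i j) < smod (A i i) + smod (A j j) := by
  obtain ⟨d₁, hd₁⟩ := hA.exists_diag_eq i
  obtain ⟨d₂, hd₂⟩ := hA.exists_diag_eq j
  rcases hc : A i j with _ | ⟨c, s⟩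
  · rw [hd₁, hd₂]
    exact WithBot.bot_lt_coe _
  by_contra! hle
  rw [hd₁, hd₂, smod_some, smod_some, smod_some] at hle
  have hle : d₁ + d₂ ≤ c + c := by exact_mod_cast hle
  obtain ⟨μ, hμi, hμj⟩ := exists_between_of_add_le hdiv hle
  obtain ⟨x, hx, hx0, y, hy, hq⟩ := exists_quadFormS_eq_of_offDiag hsym hij hs hc μ
  have hyμ : smod y ≤ ↑(c + μ) := by
    rw [hy, hd₂, smod_some, ← WithBot.coe_add, WithBot.coe_le_coe, ← add_assoc]
    gcongr
  refine not_slt_szero_sadd (not_slt_szero_sadd_neg ?_) ?_ (hq ▸ hA x hx hx0)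
  · rw [hd₁]
    exact WithBot.coe_le_coe.mpr hμi
  · rw [sadd_comm (some (c + μ, .neg))]
    exact not_slt_szero_sadd_neg hyμ

end OffDiag

/-- The cycle has length `k = m + 2`, its nodes are indexed cyclically by `Fin (m + 2)`. -/
theorem cycle_weight_bound {Γ : Type} [AddCommGroup Γ] [LinearOrder Γ] [IsOrderedAddMonoid Γ] [Nontrivial Γ]
    (hdiv : DivisibleGrp Γ) {n m : ℕ}
    (A : Matrix (Fin n) (Fin n) (Smax Γ)) (hsym : SymmS A) (hsgn : MatSigned A)
    (j : Fin (m+2) → Fin n) (hj : Function.Injective j) :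
    (TPSD A →
      sle (sabs (prodS (List.finRange (m+2)) fun l => A (j l) (j (l+1))))
        (prodS (List.finRange (m+2)) fun l => A (j l) (j l))) ∧
    (TPD A →
      slt (sabs (prodS (List.finRange (m+2)) fun l => A (j l) (j (l+1))))
        (prodS (List.finRange (m+2)) fun l => A (j l) (j l))) := by
  have hadj : ∀ l : Fin (m+2), j l ≠ j (l+1) := fun l => hj.ne (by simp)
  have hmod : ∀ f : Fin (m+2) → Smax Γ,
      smod (prodS (List.finRange (m+2)) f) = ∑ l, smod (f l) := fun f => by
    rw [smod_prodS, Fin.sum_univ_def]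
  refine ⟨fun hA => ?_, fun hA => ?_⟩
  · refine sle_of_isPos (isPos_sabs _) (isPos_prodS fun l _ => hA.isPos_diag (hsgn _ _)) ?_
    rw [smod_sabs, hmod, hmod]
    exact WithBot.sum_le_sum_of_add_self_le_cyclic fun l =>
      hA.smod_offDiag_add_self_le hdiv (hsym _ _) (hsgn _ _) (hadj l)
  · refine slt_of_isPos (isPos_prodS fun l _ => hA.tpsd.isPos_diag (hsgn _ _)) ?_
    rw [smod_sabs, hmod, hmod]
    exact WithBot.sum_lt_sum_of_add_self_lt_cyclic fun l =>
      hA.smod_offDiag_add_self_lt hdiv (hsym _ _) (hsgn _ _) (hadj l)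

end TropPaper
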